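/- arXiv:1801.01027 — 2 statements merged into one kernel-verified Lean document; each statement's English description precedes it below -/
import Mathlib

section
/- Let s ≥ 1, σ > −1/2, ξ ∈ ℝ, and let Ω ⊂ ℝˢ be a compact set. Then there is a constant C > 0 (depending on s, σ, ξ and Ω) such that for every x = (x₁,…,x_s) ∈ ℤˢ with ‖x‖ ≥ 2 and every integer z with z ≥ ‖x‖² − 1, the Lebesgue measure of the set A(z,x) = {α ∈ Ω : |z − (Σ_{i=1}^{s} α_i x_i + ξ)²| < ‖x‖^{−σ}} is at most C · ‖x‖^{−σ−1} · z^{−1/2}. -/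
/-!
Let `Ω ⊆ closedBall 0 R`, `n = ‖x‖` and `δ = n ^ (-σ)`. Since `σ > -1/2` we have `δ ≤ n ≤ z - 1`,
so `|z - (t + ξ)²| < δ` confines `t` to two intervals of length `√(z + δ) - √(z - δ) ≤ 2δ/√z`.
If `|x_i| = n`, replacing the coordinate `α_i` by `∑ α_k x_k` is a linear map of determinant
`x_i` sending the ball into a box whose `i`-th side is the set allowed for `∑ α_k x_k`; hence
the exceptional set has measure at most `2 · (2δ/√z) · (2R)^(s-1) / n`.
-/

open MeasureTheory Set

theorem Real.sqrt_add_sub_sqrt_sub_le {z δ : ℝ} (hz : 0 < z) (hδ : 0 ≤ δ) (hδz : δ ≤ z) :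
    √(z + δ) - √(z - δ) ≤ 2 * δ / √z := by
  have hsq : √(z + δ) ^ 2 - √(z - δ) ^ 2 = 2 * δ := by
    rw [Real.sq_sqrt (by linarith), Real.sq_sqrt (by linarith)]; ring
  have hle : √z ≤ √(z + δ) := Real.sqrt_le_sqrt (by linarith)
  have hab : √(z - δ) ≤ √(z + δ) := Real.sqrt_le_sqrt (by linarith)
  rw [le_div_iff₀ (Real.sqrt_pos.2 hz)]
  nlinarith [Real.sqrt_nonneg (z - δ)]

theorem Real.volume_abs_sub_sq_lt_le {z δ : ℝ} (hδz : δ ≤ z) (ξ : ℝ) :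
    volume {t : ℝ | |z - (t + ξ) ^ 2| < δ} ≤ ENNReal.ofReal (2 * (√(z + δ) - √(z - δ))) := by
  set a := √(z - δ)
  set b := √(z + δ)
  have hsub : {u : ℝ | |z - u ^ 2| < δ} ⊆ Ioo a b ∪ Ioo (-b) (-a) := by
    intro u hu
    rw [mem_ofPred_eq, abs_lt] at hu
    have ha : a < |u| := by
      rw [← Real.sqrt_sq_eq_abs]; exact Real.sqrt_lt_sqrt (by linarith) (by linarith)
    have hb : |u| < b := by
      rw [← Real.sqrt_sq_eq_abs]; exact Real.sqrt_lt_sqrt (sq_nonneg u) (by linarith)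
    rcases le_or_gt 0 u with hu0 | hu0
    · rw [abs_of_nonneg hu0] at ha hb; exact Or.inl ⟨ha, hb⟩
    · rw [abs_of_neg hu0] at ha hb; exact Or.inr ⟨by linarith, by linarith⟩
  calc volume {t : ℝ | |z - (t + ξ) ^ 2| < δ}
      = volume ((· + ξ) ⁻¹' {u : ℝ | |z - u ^ 2| < δ}) := rfl
    _ = volume {u : ℝ | |z - u ^ 2| < δ} := measure_preimage_add_right _ _ _
    _ ≤ volume (Ioo a b) + volume (Ioo (-b) (-a)) :=
      (measure_mono hsub).trans (measure_union_le _ _)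
    _ = ENNReal.ofReal (2 * (b - a)) := by
      rw [Real.volume_Ioo, Real.volume_Ioo, neg_sub_neg, ENNReal.ofReal_mul zero_le_two,
        ENNReal.ofReal_ofNat, two_mul]

section Shear
variable {ι : Type*} [Fintype ι] [DecidableEq ι]

theorem Matrix.det_updateRow_one {R : Type*} [CommRing R] (i : ι) (v : ι → R) :
    (Matrix.updateRow 1 i v).det = v i := by
  have hv : v = ∑ k, v k • (1 : Matrix ι ι R) k := by
    ext j; simp [Matrix.one_apply]
  rw [hv, Matrix.det_updateRow_sum]
  simp [Matrix.one_apply]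

theorem Matrix.updateRow_one_mulVec {R : Type*} [CommRing R] (i : ι) (v α : ι → R) (j : ι) :
    (Matrix.updateRow 1 i v).mulVec α j = if j = i then ∑ k, α k * v k else α j := by
  by_cases h : j = i
  · simp [Matrix.mulVec, dotProduct, h, mul_comm]
  · simp [Matrix.mulVec, dotProduct, h, Matrix.one_apply]

theorem volume_closedBall_inter_linear_preimage_le (v : ι → ℝ) {i : ι} (hv : v i ≠ 0)
    {R : ℝ} (hR : 0 ≤ R) {I : Set ℝ} {w : ℝ} (hI : volume I ≤ ENNReal.ofReal w) :
    volume (Metric.closedBall (0 : ι → ℝ) R ∩ {α | ∑ k, α k * v k ∈ I}) ≤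
      ENNReal.ofReal (w * (2 * R) ^ (Fintype.card ι - 1) / |v i|) := by
  set f := Matrix.toLin' (Matrix.updateRow 1 i v)
  have hdet : LinearMap.det f = v i := by rw [LinearMap.det_toLin', Matrix.det_updateRow_one]
  set box : ι → Set ℝ := Function.update (fun _ => Icc (-R) R) i I
  have hsub :
      Metric.closedBall (0 : ι → ℝ) R ∩ {α | ∑ k, α k * v k ∈ I} ⊆ f ⁻¹' pi univ box := by
    rintro α ⟨hαR, hαI⟩ j -
    rw [Matrix.toLin'_apply, Matrix.updateRow_one_mulVec]
    by_cases h : j = i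
    · subst h; simpa [box] using hαI
    · rw [closedBall_pi _ hR] at hαR
      simpa [box, h, abs_le] using hαR j (mem_univ j)
  calc _ ≤ volume (f ⁻¹' pi univ box) := measure_mono hsub
    _ = ENNReal.ofReal |(v i)⁻¹| *
        (volume I * ENNReal.ofReal (2 * R) ^ (Fintype.card ι - 1)) := by
      rw [Measure.addHaar_preimage_linearMap _ (hdet ▸ hv), hdet, volume_pi_pi]
      change _ * ∏ j, (volume ∘ box) j = _
      rw [Function.comp_update, Finset.prod_update_of_mem (Finset.mem_univ i)]
      simp only [Function.comp_def, Finset.prod_const, Real.volume_Icc, sub_neg_eq_add, ← two_mul]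
      simp [Finset.card_sdiff]
    _ ≤ ENNReal.ofReal |v i|⁻¹ *
        (ENNReal.ofReal w * ENNReal.ofReal ((2 * R) ^ (Fintype.card ι - 1))) := by
      rw [ENNReal.ofReal_pow (by positivity), abs_inv]
      gcongr
    _ = _ := by
      rw [← ENNReal.ofReal_mul' (q := (2 * R) ^ _) (by positivity),
        ← ENNReal.ofReal_mul (p := |v i|⁻¹) (by positivity), div_eq_mul_inv, mul_comm]
end Shear

theorem volume_bound_for_exceptional_sets_general
    (s : ℕ) (σ : ℝ) (hσ : -(1 / 2 : ℝ) < σ) (ξ : ℝ)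
    (Ω : Set (Fin s → ℝ)) (hΩ : IsCompact Ω) :
    ∃ C > (0 : ℝ), ∀ x : Fin s → ℤ, 2 ≤ ‖fun i => (x i : ℝ)‖ →
      ∀ z : ℤ, ‖fun i => (x i : ℝ)‖ ^ 2 - 1 ≤ (z : ℝ) →
      volume {α ∈ Ω |
          |(z : ℝ) - ((∑ i : Fin s, α i * (x i : ℝ)) + ξ) ^ 2| <
            ‖fun i => (x i : ℝ)‖ ^ (-σ)} ≤
        ENNReal.ofReal
          (C * ‖fun i => (x i : ℝ)‖ ^ (-σ - 1) * (z : ℝ) ^ (-(1 : ℝ) / 2)) := by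
  obtain ⟨R, hR, hΩR⟩ := hΩ.isBounded.subset_closedBall_lt 0 0
  refine ⟨4 * (2 * R) ^ (s - 1), by positivity, fun x hx z hz => ?_⟩
  set X : Fin s → ℝ := fun i => (x i : ℝ)
  set n := ‖X‖
  set δ := n ^ (-σ)
  have hn : 0 < n := by linarith
  have : Nonempty (Fin s) := by
    by_contra!
    norm_num [n, Subsingleton.elim X 0] at hx
  obtain ⟨⟨i, hi⟩, -⟩ := IsGreatest.pi_norm X
  have hXi : |X i| = n := hi
  have hδ : 0 ≤ δ := by positivity
  have hδn : δ ≤ n := by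
    simpa using Real.rpow_le_rpow_of_exponent_le (by linarith : 1 ≤ n) (by linarith : -σ ≤ 1)
  have hδz : δ + 1 ≤ z := by nlinarith
  have hz0 : (0 : ℝ) < z := by linarith
  have hA : {α ∈ Ω | |(z : ℝ) - ((∑ i, α i * X i) + ξ) ^ 2| < δ} ⊆
      Metric.closedBall 0 R ∩ {α | ∑ k, α k * X k ∈ {t | |(z : ℝ) - (t + ξ) ^ 2| < δ}} :=
    fun α hα => ⟨hΩR hα.1, hα.2⟩
  calc _ ≤ _ := measure_mono hA
    _ ≤ ENNReal.ofReal (2 * (√(z + δ) - √(z - δ)) * (2 * R) ^ (s - 1) / n) := by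
      simpa [hXi] using volume_closedBall_inter_linear_preimage_le X (i := i)
        (abs_pos.1 (hXi ▸ hn)) hR.le (Real.volume_abs_sub_sq_lt_le (by linarith) ξ)
    _ ≤ _ := by
      apply ENNReal.ofReal_le_ofReal
      have hn' : n ^ (-σ - 1) = δ / n := Real.rpow_sub_one hn.ne' _
      have hz' : (z : ℝ) ^ (-(1 : ℝ) / 2) = (√z)⁻¹ := by
        rw [Real.sqrt_eq_rpow, neg_div, Real.rpow_neg hz0.le]
      rw [hn', hz']
      calc _ ≤ 2 * (2 * δ / √z) * (2 * R) ^ (s - 1) / n := by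
            gcongr
            exact Real.sqrt_add_sub_sqrt_sub_le hz0 hδ (by linarith)
        _ = _ := by ring

/-- **Lemma (volume bound for the exceptional sets `A(z,x)`).**
Let `s ≥ 1`, `σ > −1/2`, `ξ ∈ ℝ`, and `Ω ⊆ ℝˢ` compact.  There is `C > 0` such that for all
`x ∈ ℤˢ` with `‖x‖ ≥ 2` and all integers `z ≥ ‖x‖² − 1`, the Lebesgue measure of
`A(z,x) = {α ∈ Ω : |z − (Σ α_i x_i + ξ)²| < ‖x‖^(−σ)}` is at most
`C·‖x‖^(−σ−1)·z^(−1/2)`. -/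
theorem volume_bound_for_exceptional_sets
    (s : ℕ) (hs : 1 ≤ s) (σ : ℝ) (hσ : -(1 / 2 : ℝ) < σ) (ξ : ℝ)
    (Ω : Set (Fin s → ℝ)) (hΩ : IsCompact Ω) :
    ∃ C > (0 : ℝ), ∀ x : Fin s → ℤ, 2 ≤ ‖fun i => (x i : ℝ)‖ →
      ∀ z : ℤ, ‖fun i => (x i : ℝ)‖ ^ 2 - 1 ≤ (z : ℝ) →
      volume {α ∈ Ω |
          |(z : ℝ) - ((∑ i : Fin s, α i * (x i : ℝ)) + ξ) ^ 2| <
            ‖fun i => (x i : ℝ)‖ ^ (-σ)} ≤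
        ENNReal.ofReal
          (C * ‖fun i => (x i : ℝ)‖ ^ (-σ - 1) * (z : ℝ) ^ (-(1 : ℝ) / 2)) :=
  volume_bound_for_exceptional_sets_general s σ hσ ξ Ω hΩ
end

section
/- Let U ⊂ ℝᴺ be open, let φ : U → ℝᵐ be continuously differentiable, and let g₀ ∈ U be a point at which the derivative Dφ(g₀) : ℝᴺ → ℝᵐ is surjective. Then there exist a bounded open neighborhood B ⊂ U of g₀ and constants c > 0, ε₀ > 0 such that for every ε ∈ (0, ε₀), the N-dimensional Lebesgue measure of the set {g ∈ B : ‖φ(g) − φ(g₀)‖ < ε} is at least c·εᵐ. -/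
/-!
If `T` is a continuous right inverse of `φ'`, the map `f g = g + T (φ g - φ' g)` has derivative
the identity at `g₀` and satisfies `φ' ∘ f = φ`: it is a local diffeomorphism turning `φ` into the
linear map `φ'`. Preimages under a local diffeomorphism keep at least a fixed fraction of the
volume, so it suffices to bound from below the volume of the small vectors `y` with
`‖φ' y‖ < ε`. Splitting `ℝᴺ` as `ℝᵐ × ker φ'`, this set contains a box
`ball 0 ε × ball 0 η`, whose volume is a constant times `εᵐ`.
-/

open MeasureTheory Measure Metric Filter Topology
open scoped NNReal ENNReal

variable {E F : Type*} [NormedAddCommGroup E] [NormedSpace ℝ E]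
  [NormedAddCommGroup F] [NormedSpace ℝ F]

theorem HasStrictFDerivAt.id_add_clm_comp_sub {φ : E → F} {φ' : E →L[ℝ] F} {a : E}
    (hφ : HasStrictFDerivAt φ φ' a) (T : F →L[ℝ] E) :
    HasStrictFDerivAt (fun x => x + T (φ x - φ' x)) (ContinuousLinearMap.id ℝ E) a := by
  convert (hasStrictFDerivAt_id a).add (T.hasStrictFDerivAt.comp a (hφ.sub φ'.hasStrictFDerivAt))
    using 1
  · rfl
  · simp

section FiniteDimensional

variable [FiniteDimensional ℝ E]

theorem ContinuousLinearMap.exists_continuousLinearEquiv_prod_ker {L : E →L[ℝ] F}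
    (hL : Function.Surjective L) :
    ∃ e : E ≃L[ℝ] F × L.ker, ∀ x, (e x).1 = L x := by
  obtain ⟨Q, hQ⟩ := L.ker.exists_isCompl
  let e := LinearMap.equivProdOfSurjectiveOfIsCompl (L : E →ₗ[ℝ] F)
    (L.ker.projectionOnto Q hQ) (LinearMap.range_eq_top.2 hL)
    (Submodule.range_projectionOnto hQ) (by rwa [Submodule.ker_projectionOnto])
  exact ⟨e.toContinuousLinearEquiv, fun x => rfl⟩

variable [MeasurableSpace E] [BorelSpace E]

theorem HasStrictFDerivAt.exists_mul_addHaar_le_addHaar_inter_preimage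
    (μ : Measure E) [μ.IsAddHaarMeasure] {f : E → E} {f' : E →L[ℝ] E} {a : E}
    (hf : HasStrictFDerivAt f f' a) (hf' : Function.Surjective f') {s : Set E} (hs : s ∈ 𝓝 a) :
    ∃ C : ℝ≥0, 0 < C ∧ ∃ t ∈ 𝓝 (f a), ∀ S ⊆ t, C * μ S ≤ μ (s ∩ f ⁻¹' S) := by
  set m : ℝ≥0 := Real.toNNReal |f'.det| + 1
  have hm : ENNReal.ofReal |f'.det| < m := ENNReal.coe_lt_coe.2 (lt_add_one _)
  -- where `f` is `δ`-close to `f'`, it multiplies volumes by at most `m`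
  obtain ⟨δ, hδ, hδpos⟩ :=
    ((addHaar_image_le_mul_of_det_lt μ f' hm).and self_mem_nhdsWithin).exists
  obtain ⟨u, hu, hfu⟩ := hf.approximates_deriv_on_nhds (Or.inr hδpos)
  refine ⟨m⁻¹, by positivity, f '' (s ∩ u), ?_, fun S hS => ?_⟩
  · rw [← hf.map_nhds_eq_of_surj (LinearMap.range_eq_top.2 hf')]
    exact image_mem_map (inter_mem hs hu)
  have hS : S ⊆ f '' (s ∩ u ∩ f ⁻¹' S) := by
    intro y hy
    obtain ⟨x, hx, rfl⟩ := hS hy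
    exact ⟨x, ⟨hx, hy⟩, rfl⟩
  have hm0 : (m : ℝ≥0∞) ≠ 0 := by positivity
  calc (m⁻¹ : ℝ≥0) * μ S ≤ (m : ℝ≥0∞)⁻¹ * (m * μ (s ∩ u ∩ f ⁻¹' S)) := by
        rw [ENNReal.coe_inv (by positivity)]
        gcongr
        exact (measure_mono hS).trans
          (hδ _ _ (hfu.mono_set fun x hx => hx.1.2))
    _ = μ (s ∩ u ∩ f ⁻¹' S) := ENNReal.inv_mul_cancel_left hm0 ENNReal.coe_ne_top
    _ ≤ μ (s ∩ f ⁻¹' S) := measure_mono fun x hx => ⟨hx.1.1, hx.2⟩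

theorem ContinuousLinearMap.exists_ofReal_mul_pow_le_addHaar_ball_inter_preimage_ball
    [FiniteDimensional ℝ F] (μ : Measure E) [μ.IsAddHaarMeasure] {L : E →L[ℝ] F}
    (hL : Function.Surjective L) {ρ : ℝ} (hρ : 0 < ρ) :
    ∃ c > (0 : ℝ), ∃ ε₀ > (0 : ℝ), ∀ ε, 0 < ε → ε < ε₀ →
      ENNReal.ofReal (c * ε ^ Module.finrank ℝ F) ≤ μ (ball 0 ρ ∩ L ⁻¹' ball 0 ε) := by
  let _ : MeasurableSpace F := borel F
  have : BorelSpace F := ⟨rfl⟩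
  obtain ⟨e, he⟩ := L.exists_continuousLinearEquiv_prod_ker hL
  obtain ⟨η, hη, hηρ⟩ : ∃ η > 0, ball 0 η ⊆ e.symm ⁻¹' ball 0 ρ :=
    Metric.isOpen_iff.1 (isOpen_ball.preimage e.symm.continuous) 0 (by simpa using hρ)
  let ν : Measure (F × L.ker) := addHaar.prod addHaar
  set a := addHaarScalarFactor (μ.map e) ν
  have hμν : μ.map e = a • ν := isAddLeftInvariant_eq_smul _ _
  set k : ℝ≥0∞ := a * addHaar (ball (0 : F) 1) * addHaar (ball (0 : L.ker) η)
  have hk : k ≠ 0 := by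
    have := addHaarScalarFactor_pos_of_isAddHaarMeasure (μ.map e) ν
    simp [k, a, this.ne', (isOpen_ball.measure_pos addHaar (nonempty_ball.2 one_pos)).ne',
      (isOpen_ball.measure_pos addHaar (nonempty_ball.2 hη)).ne']
  have hk' : k ≠ ∞ := by
    simp [k, ENNReal.mul_eq_top, measure_ball_lt_top.ne]
  refine ⟨k.toReal, ENNReal.toReal_pos hk hk', η, hη, fun ε hε hεη => ?_⟩
  have hsub : e ⁻¹' (ball 0 ε ×ˢ ball 0 η) ⊆ ball 0 ρ ∩ L ⁻¹' ball 0 ε := by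
    rintro x ⟨hx₁, hx₂⟩
    refine ⟨?_, by simpa [he] using hx₁⟩
    have : e x ∈ ball 0 η := by
      rw [← ball_prod_same]; exact ⟨ball_subset_ball hεη.le hx₁, hx₂⟩
    simpa using hηρ this
  calc ENNReal.ofReal (k.toReal * ε ^ Module.finrank ℝ F)
      = a * (addHaar (ball (0 : F) ε) * addHaar (ball (0 : L.ker) η)) := by
        rw [ENNReal.ofReal_mul ENNReal.toReal_nonneg, ENNReal.ofReal_toReal hk',
          addHaar_ball_of_pos _ _ hε]
        ring
    _ = μ (e ⁻¹' (ball 0 ε ×ˢ ball 0 η)) := by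
        rw [← map_apply e.continuous.measurable (isOpen_ball.prod isOpen_ball).measurableSet,
          hμν, Measure.smul_apply, ENNReal.smul_def, smul_eq_mul, prod_prod]
    _ ≤ μ (ball 0 ρ ∩ L ⁻¹' ball 0 ε) := measure_mono hsub

end FiniteDimensional

/-- **Lemma (measure lower bound for sublevel sets of a submersion).**
Let `U ⊆ ℝᴺ` be open, `φ : U → ℝᵐ` continuously differentiable, and suppose the derivative
`φ' = Dφ(g₀)` at `g₀ ∈ U` is surjective.  Then there are a bounded open neighborhood
`B ⊆ U` of `g₀` and constants `c > 0`, `ε₀ > 0` such that for all `ε ∈ (0,ε₀)`,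
`vol {g ∈ B : ‖φ(g) − φ(g₀)‖ < ε} ≥ c·εᵐ`. -/
theorem measure_lower_bound_for_submersion_sublevel_sets
    (N m : ℕ) (U : Set (Fin N → ℝ)) (hU : IsOpen U)
    (φ : (Fin N → ℝ) → (Fin m → ℝ)) (hφ : ContDiffOn ℝ 1 φ U)
    (g₀ : Fin N → ℝ) (hg₀ : g₀ ∈ U)
    (φ' : (Fin N → ℝ) →L[ℝ] (Fin m → ℝ)) (hφ' : HasFDerivAt φ φ' g₀)
    (hsurj : Function.Surjective φ') :
    ∃ B : Set (Fin N → ℝ), IsOpen B ∧ Bornology.IsBounded B ∧ g₀ ∈ B ∧ B ⊆ U ∧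
      ∃ c > (0 : ℝ), ∃ ε₀ > (0 : ℝ), ∀ ε : ℝ, 0 < ε → ε < ε₀ →
        ENNReal.ofReal (c * ε ^ m) ≤ volume {g ∈ B | ‖φ g - φ g₀‖ < ε} := by
  obtain ⟨T, hT⟩ := φ'.exists_rightInverse_of_surjective (LinearMap.range_eq_top.2 hsurj)
  have hφT : ∀ v, φ' (T v) = v := fun v => congr($hT v)
  set f := fun g => g + T (φ g - φ' g)
  have hφf : ∀ g, φ' (f g) = φ g := fun g => by simp [f, hφT]
  have hf : HasStrictFDerivAt f (ContinuousLinearMap.id ℝ _) g₀ :=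
    ((hφ.contDiffAt (hU.mem_nhds hg₀)).hasStrictFDerivAt' hφ' one_ne_zero).id_add_clm_comp_sub T
  obtain ⟨r, hr, hrU⟩ := Metric.isOpen_iff.1 hU g₀ hg₀
  obtain ⟨C, hC, t, ht, hCt⟩ := hf.exists_mul_addHaar_le_addHaar_inter_preimage volume
    Function.surjective_id (ball_mem_nhds g₀ hr)
  obtain ⟨ρ, hρ, hρt⟩ := Metric.mem_nhds_iff.1 ht
  obtain ⟨c, hc, ε₀, hε₀, hvol⟩ :=
    φ'.exists_ofReal_mul_pow_le_addHaar_ball_inter_preimage_ball volume hsurj hρ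
  refine ⟨ball g₀ r, isOpen_ball, isBounded_ball, mem_ball_self hr, hrU,
    C * c, mul_pos hC hc, ε₀, hε₀, fun ε hε hεε₀ => ?_⟩
  set S := (· - f g₀) ⁻¹' (ball 0 ρ ∩ φ' ⁻¹' ball 0 ε)
  have hSt : S ⊆ t := fun y hy => hρt (by simpa [dist_eq_norm] using hy.1)
  have hsub : ball g₀ r ∩ f ⁻¹' S ⊆ {g ∈ ball g₀ r | ‖φ g - φ g₀‖ < ε} :=
    fun g hg => ⟨hg.1, by simpa [hφf] using hg.2.2⟩
  calc ENNReal.ofReal (C * c * ε ^ m) = C * ENNReal.ofReal (c * ε ^ m) := by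
        rw [mul_assoc, ENNReal.ofReal_mul C.coe_nonneg, ENNReal.ofReal_coe_nnreal]
    _ ≤ C * volume (ball 0 ρ ∩ φ' ⁻¹' ball 0 ε) := by
        gcongr; simpa using hvol ε hε hεε₀
    _ = C * volume S := by simp only [S, sub_eq_add_neg, measure_preimage_add_right]
    _ ≤ volume (ball g₀ r ∩ f ⁻¹' S) := hCt S hSt
    _ ≤ volume {g ∈ ball g₀ r | ‖φ g - φ g₀‖ < ε} := measure_mono hsub
end
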